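/- The map φ_M(P) = M P Mᵀ, for M ∈ O(n), is a group homomorphism with respect to the operation ⊙ on SPD matrices: φ_M(X ⊙ Y) = φ_M(X) ⊙ φ_M(Y). -/

import Mathlib

open Matrix

/-- The matrix exponential on real square matrices. -/
noncomputable def mexp {n : ℕ} (A : Matrix (Fin n) (Fin n) ℝ) : Matrix (Fin n) (Fin n) ℝ :=
  NormedSpace.exp A

open scoped Classical in
/-- The principal matrix logarithm of a symmetric positive definite matrix:
the (unique) symmetric matrix whose exponential is `X` (junk value `0` otherwise). -/
noncomputable def spdLog {n : ℕ} (X : Matrix (Fin n) (Fin n) ℝ) : Matrix (Fin n) (Fin n) ℝ :=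
  if h : ∃ A : Matrix (Fin n) (Fin n) ℝ, A.IsSymm ∧ mexp A = X then h.choose else 0

/-- The Lie group operation `P ⊙ Q = exp (log P + log Q)` on SPD matrices. -/
noncomputable def odot {n : ℕ} (P Q : Matrix (Fin n) (Fin n) ℝ) : Matrix (Fin n) (Fin n) ℝ :=
  mexp (spdLog P + spdLog Q)

/-! The proof rests on two facts: the exponential commutes with conjugation by an invertible
matrix, and it is a bijection from symmetric matrices onto SPD matrices. Conjugation by an
orthogonal `M` preserves symmetry, so it carries the symmetric logarithm of `X` to that of
`M X Mᵀ`, and `M (log X + log Y) Mᵀ = log (M X Mᵀ) + log (M Y Mᵀ)`. -/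

variable {n : ℕ}

lemma Matrix.IsSymm.mul_mul_transpose {m k R : Type*} [Fintype m] [CommSemiring R]
    {A : Matrix m m R} (hA : A.IsSymm) (M : Matrix k m R) : (M * A * Mᵀ).IsSymm := by
  rw [IsSymm, transpose_mul, transpose_mul, transpose_transpose, hA.eq, Matrix.mul_assoc]

lemma mexp_conj_of_mul_transpose_eq_one {M : Matrix (Fin n) (Fin n) ℝ} (hM : M * Mᵀ = 1)
    (A : Matrix (Fin n) (Fin n) ℝ) : mexp (M * A * Mᵀ) = M * mexp A * Mᵀ := by
  rw [← inv_eq_right_inv hM]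
  exact exp_conj M A (.of_mul_eq_one Mᵀ hM)

section Log

/- The continuous functional calculus needs a C⋆-algebra norm on matrices; `mexp` does not
depend on the choice of norm. -/
attribute [local instance] Matrix.instL2OpNormedRing Matrix.instL2OpNormedAlgebra

lemma mexp_injOn_isSymm : {A : Matrix (Fin n) (Fin n) ℝ | A.IsSymm}.InjOn mexp := by
  intro A hA B hB h
  have hA' : IsSelfAdjoint A := isHermitian_iff_isSymm.2 hA
  have hB' : IsSelfAdjoint B := isHermitian_iff_isSymm.2 hB
  rw [← CFC.log_exp A hA', ← CFC.log_exp B hB']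
  exact congrArg CFC.log h

lemma Matrix.PosDef.exists_isSymm_mexp_eq {X : Matrix (Fin n) (Fin n) ℝ} (hX : X.PosDef) :
    ∃ A : Matrix (Fin n) (Fin n) ℝ, A.IsSymm ∧ mexp A = X :=
  ⟨CFC.log X, isHermitian_iff_isSymm.1 IsSelfAdjoint.log,
    open MatrixOrder in CFC.exp_log X hX.isStrictlyPositive⟩

end Log

lemma spdLog_spec {X : Matrix (Fin n) (Fin n) ℝ}
    (h : ∃ A : Matrix (Fin n) (Fin n) ℝ, A.IsSymm ∧ mexp A = X) :
    (spdLog X).IsSymm ∧ mexp (spdLog X) = X := by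
  classical
  rw [spdLog, dif_pos h]
  exact h.choose_spec

lemma spdLog_mexp {A : Matrix (Fin n) (Fin n) ℝ} (hA : A.IsSymm) : spdLog (mexp A) = A :=
  let hlog := spdLog_spec ⟨A, hA, rfl⟩
  mexp_injOn_isSymm hlog.1 hA hlog.2

lemma mexp_spdLog {X : Matrix (Fin n) (Fin n) ℝ} (hX : X.PosDef) : mexp (spdLog X) = X :=
  (spdLog_spec hX.exists_isSymm_mexp_eq).2

lemma spdLog_conj_of_mul_transpose_eq_one {X M : Matrix (Fin n) (Fin n) ℝ} (hX : X.PosDef)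
    (hM : M * Mᵀ = 1) : spdLog (M * X * Mᵀ) = M * spdLog X * Mᵀ := by
  have hlog : (spdLog X).IsSymm := (spdLog_spec hX.exists_isSymm_mexp_eq).1
  conv_lhs => rw [← mexp_spdLog hX, ← mexp_conj_of_mul_transpose_eq_one hM]
  exact spdLog_mexp (hlog.mul_mul_transpose M)

theorem conj_odot_hom_general {n : ℕ} (X Y M : Matrix (Fin n) (Fin n) ℝ)
    (hX : X.PosDef) (hY : Y.PosDef)
    (hM : M * Mᵀ = 1) :
    M * odot X Y * Mᵀ = odot (M * X * Mᵀ) (M * Y * Mᵀ) := by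
  rw [odot, odot, spdLog_conj_of_mul_transpose_eq_one hX hM,
    spdLog_conj_of_mul_transpose_eq_one hY hM, ← Matrix.add_mul, ← Matrix.mul_add,
    mexp_conj_of_mul_transpose_eq_one hM]

/-- For orthogonal `M`, the map `φ_M(P) = M P Mᵀ` is a group homomorphism for `⊙`. -/
theorem conj_odot_hom {n : ℕ} (X Y M : Matrix (Fin n) (Fin n) ℝ)
    (hX : X.PosDef) (hXs : X.IsSymm) (hY : Y.PosDef) (hYs : Y.IsSymm)
    (hM : M * Mᵀ = 1) :
    M * odot X Y * Mᵀ = odot (M * X * Mᵀ) (M * Y * Mᵀ) :=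
  conj_odot_hom_general X Y M hX hY hM
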